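/- In the two-route congestion game with utility u(A,μ) = -1 - ρ μ_A and u(B,μ) = -1 - ρ μ_B (ρ ∈ (0,1)): if α > 1/2 then the unique α-RNE is μ = (1/2, 1/2); if α ≤ 1/2 then the set of α-RNEs is exactly { (α, 1-α), (1-α, α) }. -/
import Mathlib


open Finset

/-- A probability vector on the finite action set `Fin n`. -/
def IsProb {n : ℕ} (μ : Fin n → ℝ) : Prop := (∀ i, 0 ≤ μ i) ∧ ∑ i, μ i = 1

/-- The herding choice `A^H(μ)`: the smallest index among the maximizers of `μ`. -/
noncomputable def herd {n : ℕ} [NeZero n] (μ : Fin n → ℝ) : Fin n := by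
  classical
  exact (Finset.univ.filter (fun i => ∀ j, μ j ≤ μ i)).min' (by
    obtain ⟨b, _, hb⟩ := Finset.exists_max_image (Finset.univ : Finset (Fin n)) μ Finset.univ_nonempty
    exact ⟨b, by
      simp only [Finset.mem_filter, Finset.mem_univ, true_and]
      exact fun j => hb j (Finset.mem_univ j)⟩)

/-- `(μ, μR)` is an `α`-Rational Nash Equilibrium for the utility `u`. -/
def IsRNE {n : ℕ} [NeZero n] (u : Fin n → (Fin n → ℝ) → ℝ) (α : ℝ)
    (μ μR : Fin n → ℝ) : Prop :=
  IsProb μ ∧ IsProb μR ∧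
  (∀ i, 0 < μR i → ∀ j, u j μ ≤ u i μ) ∧
  (∀ i, μ i = α * μR i + if i = herd μ then 1 - α else 0)

/-- `μ` is a classical mean-field Nash equilibrium. -/
def IsNE1 {n : ℕ} (u : Fin n → (Fin n → ℝ) → ℝ) (μ : Fin n → ℝ) : Prop :=
  IsProb μ ∧ ∀ i, 0 < μ i → ∀ j, u j μ ≤ u i μ

/-- Utility of the two-route congestion game: `u(i,μ) = -1 - ρ μ_i`. -/
def uTwo (ρ : ℝ) : Fin 2 → (Fin 2 → ℝ) → ℝ := fun i ν => -1 - ρ * ν i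

lemma herd_zero (μ : Fin 2 → ℝ) (h : μ 1 ≤ μ 0) : herd μ = 0 := by
  have h0 : (0 : Fin 2) ∈ Finset.univ.filter (fun i => ∀ j, μ j ≤ μ i) := by
    simp only [Finset.mem_filter, Finset.mem_univ, true_and]
    intro j; fin_cases j <;> simp [h]
  have hle : herd μ ≤ 0 := Finset.min'_le _ 0 h0
  exact le_antisymm hle (Fin.zero_le _)

lemma herd_max (μ : Fin 2 → ℝ) : ∀ j, μ j ≤ μ (herd μ) := by
  have h : herd μ ∈ Finset.univ.filter (fun i => ∀ j, μ j ≤ μ i) := by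
    unfold herd; exact Finset.min'_mem _ _
  simpa using (Finset.mem_filter.mp h).2

lemma herd_one (μ : Fin 2 → ℝ) (h : μ 0 < μ 1) : herd μ = 1 := by
  have h2 : ∀ i : Fin 2, i = 0 ∨ i = 1 := by decide
  rcases h2 (herd μ) with h0 | h1
  · exfalso; have := herd_max μ 1; rw [h0] at this; linarith
  · exact h1

lemma rne_char (ρ : ℝ) (hρ0 : 0 < ρ) (α : ℝ) (hα0 : 0 < α) (hα1 : α ≤ 1)
    (μ : Fin 2 → ℝ) (hμ : IsProb μ) :
    (∃ μR, IsRNE (uTwo ρ) α μ μR) ↔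
      ((1/2 ≤ α ∧ μ 0 = 1/2 ∧ μ 1 = 1/2) ∨
       (α ≤ 1/2 ∧ ((μ 0 = α ∧ μ 1 = 1-α) ∨ (μ 0 = 1-α ∧ μ 1 = α)))) := by
  obtain ⟨hpos, hsum⟩ := hμ
  have hsum2 : μ 0 + μ 1 = 1 := by rw [← Fin.sum_univ_two μ]; exact hsum
  constructor
  · rintro ⟨μR, _, ⟨hRpos, hRsum⟩, hsupp, heq⟩
    have hRsum2 : μR 0 + μR 1 = 1 := by rw [← Fin.sum_univ_two μR]; exact hRsum
    rcases lt_trichotomy (μ 0) (μ 1) with h | h | h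
    · -- herd = 1
      have hh : herd μ = 1 := herd_one μ h
      have h0 := heq 0; have h1 := heq 1
      rw [hh] at h0 h1
      simp only [if_pos rfl] at h1
      norm_num at h0
      have hR1 : μR 1 = 0 := by
        by_contra hne
        have hpos1 : 0 < μR 1 := lt_of_le_of_ne (hRpos 1) (Ne.symm hne)
        have := hsupp 1 hpos1 0
        simp only [uTwo] at this
        nlinarith
      have hR0 : μR 0 = 1 := by linarith
      rw [hR1] at h1; rw [hR0] at h0
      right
      constructor
      · nlinarith
      · left; constructor <;> linarith
    · -- equal, both 1/2
      have e0 : μ 0 = 1/2 := by linarith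
      have e1 : μ 1 = 1/2 := by linarith
      have hh : herd μ = 0 := herd_zero μ (le_of_eq h.symm)
      have h1 := heq 1
      rw [hh] at h1
      norm_num at h1
      have hR1le : μR 1 ≤ 1 := by have := hRpos 0; linarith
      left
      refine ⟨?_, e0, e1⟩
      nlinarith
    · -- herd = 0
      have hh : herd μ = 0 := herd_zero μ (le_of_lt h)
      have h0 := heq 0; have h1 := heq 1
      rw [hh] at h0 h1
      simp only [if_pos rfl] at h0
      norm_num at h1
      have hR0 : μR 0 = 0 := by
        by_contra hne
        have hpos0 : 0 < μR 0 := lt_of_le_of_ne (hRpos 0) (Ne.symm hne)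
        have := hsupp 0 hpos0 1
        simp only [uTwo] at this
        nlinarith
      have hR1 : μR 1 = 1 := by linarith
      rw [hR0] at h0; rw [hR1] at h1
      right
      constructor
      · nlinarith
      · right; constructor <;> linarith
  · rintro (⟨hhalf, e0, e1⟩ | ⟨hhalf, ⟨e0, e1⟩ | ⟨e0, e1⟩⟩)
    · -- μ = (1/2, 1/2), α ≥ 1/2, μR = (1 - 1/(2α), 1/(2α))
      refine ⟨![1 - 1/(2*α), 1/(2*α)], ⟨hpos, hsum⟩, ⟨?_, ?_⟩, ?_, ?_⟩
      · intro i
        have h2α : (0:ℝ) < 2*α := by linarith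
        have hle : 1/(2*α) ≤ 1 := by rw [div_le_one h2α]; linarith
        fin_cases i <;> simp
        · rw [show α⁻¹ * 2⁻¹ = 1/(2*α) by rw [one_div, mul_inv]; ring]
          exact hle
        · linarith
      · rw [Fin.sum_univ_two]; simp
      · intro i _ j
        fin_cases i <;> fin_cases j <;> simp [uTwo, e0, e1]
      · have hh : herd μ = 0 := herd_zero μ (by rw [e0, e1])
        intro i
        fin_cases i <;> simp [hh, e0, e1] <;> field_simp <;> ring
    · -- μ = (α, 1-α)
      rcases lt_or_eq_of_le hhalf with hlt | heqα
      · -- herd = 1, μR = (1, 0)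
        have hh : herd μ = 1 := herd_one μ (by rw [e0, e1]; linarith)
        refine ⟨![1, 0], ⟨hpos, hsum⟩, ⟨?_, ?_⟩, ?_, ?_⟩
        · intro i; fin_cases i <;> norm_num
        · rw [Fin.sum_univ_two]; norm_num
        · intro i hi j
          fin_cases i <;> fin_cases j <;> simp [uTwo, e0, e1] at hi ⊢ <;> nlinarith
        · intro i; fin_cases i <;> simp [hh, e0, e1]
      · -- α = 1/2, μ = (1/2, 1/2), herd = 0, μR = (0,1)
        have hh : herd μ = 0 := herd_zero μ (by rw [e0, e1]; linarith)
        refine ⟨![0, 1], ⟨hpos, hsum⟩, ⟨?_, ?_⟩, ?_, ?_⟩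
        · intro i; fin_cases i <;> norm_num
        · rw [Fin.sum_univ_two]; norm_num
        · intro i hi j
          fin_cases i <;> fin_cases j <;> simp [uTwo, e0, e1] at hi ⊢ <;> nlinarith
        · intro i; fin_cases i <;> simp [hh, e0, e1] <;> linarith
    · -- μ = (1-α, α), herd = 0, μR = (0,1)
      have hh : herd μ = 0 := herd_zero μ (by rw [e0, e1]; linarith)
      refine ⟨![0, 1], ⟨hpos, hsum⟩, ⟨?_, ?_⟩, ?_, ?_⟩
      · intro i; fin_cases i <;> norm_num
      · rw [Fin.sum_univ_two]; norm_num
      · intro i hi j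
        fin_cases i <;> fin_cases j <;> simp [uTwo, e0, e1] at hi ⊢ <;> nlinarith
      · intro i; fin_cases i <;> simp [hh, e0, e1]

/-- α-RNEs of the two-route congestion game. -/
theorem rne_two_route (ρ : ℝ) (hρ0 : 0 < ρ) (hρ1 : ρ < 1)
    (α : ℝ) (hα0 : 0 < α) (hα1 : α ≤ 1) (μ : Fin 2 → ℝ) (hμ : IsProb μ) :
    (1 / 2 < α →
      ((∃ μR, IsRNE (uTwo ρ) α μ μR) ↔ (μ 0 = 1 / 2 ∧ μ 1 = 1 / 2))) ∧
    (α ≤ 1 / 2 →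
      ((∃ μR, IsRNE (uTwo ρ) α μ μR) ↔
        ((μ 0 = α ∧ μ 1 = 1 - α) ∨ (μ 0 = 1 - α ∧ μ 1 = α)))) := by
  constructor
  · intro hα
    rw [rne_char ρ hρ0 α hα0 hα1 μ hμ]
    constructor
    · rintro (⟨_, h⟩ | ⟨h2, _⟩)
      · exact h
      · exfalso; linarith
    · intro h; left; exact ⟨le_of_lt hα, h⟩
  · intro hα
    rw [rne_char ρ hρ0 α hα0 hα1 μ hμ]
    constructor
    · rintro (⟨h1, h0, h1'⟩ | ⟨_, h⟩)
      · left; constructor <;> linarith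
      · exact h
    · intro h; right; exact ⟨hα, h⟩
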